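/- Combining the block and majority lemmas: let x₁,…,x_n be i.i.d. ℝ^d-valued with mean μ and covariance Σ, δ ∈ (0,1), and b = 1 + ⌊3.5 log(1/δ)⌋ with b ≤ n. Partition the samples into b blocks of size ⌊n/b⌋, let μ̂ᵢ be the block sample means, and let μ̂_GMOM be their geometric median. Then with probability at least 1 − δ, ‖μ̂_GMOM − μ‖₂ ≤ C·sqrt(trace(Σ)·(1 + log(1/δ))/n) for a universal constant C. -/

import Mathlib

/-! Each block mean has second moment `tr Σ / m`, the cross terms vanishing by independence, so by
Chebyshev it lies within `r = 36 √(tr Σ / m)` of `μ` except with probability `1 / 1296`. Disjoint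
blocks are independent, hence more than a quarter of the `b` blocks fail only with probability at
most `C(b, b/4 + 1) 1296^-(b/4 + 1) ≤ 3^-b ≤ e^-b ≤ δ`. Otherwise at least three quarters of the
block means lie within `r` of `μ`; comparing the sum of distances from the geometric median with the
sum of distances from `μ` then places the median within `4 r` of `μ`. -/

open MeasureTheory ProbabilityTheory Finset Function TopologicalSpace
open scoped Classical ENNReal InnerProductSpace

section GeometricMedian

variable {ι E : Type*} [Fintype ι] [SeminormedAddCommGroup E] {y : ι → E} {z μ : E} {r : ℝ}

theorem card_sub_card_mul_norm_sub_le (hz : ∑ i, ‖z - y i‖ ≤ ∑ i, ‖μ - y i‖) :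
    ((#{i | ¬r < ‖y i - μ‖} : ℝ) - #{i | r < ‖y i - μ‖}) * ‖z - μ‖ ≤
      2 * #{i | ¬r < ‖y i - μ‖} * r := by
  set f : ι → ℝ := fun i => ‖z - y i‖ - ‖μ - y i‖
  have hf : ∑ i, f i ≤ 0 := by simpa [f, sub_nonpos] using hz
  have hnear : ∀ i ∈ ({i | ¬r < ‖y i - μ‖} : Finset ι), ‖z - μ‖ - 2 * r ≤ f i := by
    intro i hi
    simp only [mem_filter, mem_univ, true_and, not_lt] at hi
    have htri := norm_sub_le_norm_sub_add_norm_sub z (y i) μ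
    have hrev := norm_sub_rev μ (y i)
    simp only [f]
    linarith
  have hfar : ∀ i ∈ ({i | r < ‖y i - μ‖} : Finset ι), -‖z - μ‖ ≤ f i := by
    intro i _
    have htri := norm_sub_le_norm_sub_add_norm_sub μ z (y i)
    rw [norm_sub_rev μ z] at htri
    simp only [f]
    linarith
  have hsum := add_le_add (card_nsmul_le_sum _ _ _ hnear) (card_nsmul_le_sum _ _ _ hfar)
  rw [sum_filter_not_add_sum_filter, nsmul_eq_mul, nsmul_eq_mul] at hsum
  linarith

theorem norm_sub_le_four_mul_of_sum_norm_sub_le [Nonempty ι]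
    (hz : ∑ i, ‖z - y i‖ ≤ ∑ i, ‖μ - y i‖) (hr : 0 ≤ r)
    (hfar : 4 * #{i | r < ‖y i - μ‖} ≤ Fintype.card ι) :
    ‖z - μ‖ ≤ 4 * r := by
  have hsplit := card_filter_add_card_filter_not (s := univ) fun i => r < ‖y i - μ‖
  rw [card_univ] at hsplit
  have hN : (0 : ℝ) < Fintype.card ι := by exact_mod_cast Fintype.card_pos
  have hfar' : (4 * #{i | r < ‖y i - μ‖} : ℝ) ≤ Fintype.card ι := by exact_mod_cast hfar
  have hsplit' : (#{i | r < ‖y i - μ‖} + #{i | ¬r < ‖y i - μ‖} : ℝ) = Fintype.card ι := by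
    exact_mod_cast hsplit
  have := card_sub_card_mul_norm_sub_le (r := r) hz
  nlinarith [norm_nonneg (z - μ)]

end GeometricMedian

theorem card_filter_div_eq {n m i : ℕ} (hm : 0 < m) (h : (i + 1) * m ≤ n) :
    #{k : Fin n | k.val / m = i} = m := by
  rw [← card_map Fin.valEmbedding, show map Fin.valEmbedding {k : Fin n | k.val / m = i} =
      Ico (i * m) (i * m + m) from ?_, Nat.card_Ico, Nat.add_sub_cancel_left]
  ext j
  simp only [mem_map, mem_filter, mem_univ, true_and, Fin.valEmbedding_apply, mem_Ico,
    Nat.div_eq_iff hm]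
  constructor
  · rintro ⟨k, hk, rfl⟩; omega
  · intro hj; exact ⟨⟨j, by nlinarith⟩, by simp only; omega, rfl⟩

theorem choose_mul_pow_le_exp_neg (b : ℕ) :
    (b.choose (b / 4 + 1) : ℝ) * (1 / 1296) ^ (b / 4 + 1) ≤ Real.exp (-b) :=
  calc (b.choose (b / 4 + 1) : ℝ) * (1 / 1296) ^ (b / 4 + 1)
      ≤ 2 ^ b * (1 / 6) ^ b := by
        rw [show (1 / 1296 : ℝ) = (1 / 6) ^ 4 by norm_num, ← pow_mul]
        refine mul_le_mul (by exact_mod_cast Nat.choose_le_two_pow b _)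
          (pow_le_pow_of_le_one (by norm_num) (by norm_num) (by omega)) (by positivity)
          (by positivity)
    _ = (1 / 3) ^ b := by rw [← mul_pow]; norm_num
    _ ≤ Real.exp (-1) ^ b := by
        gcongr
        rw [Real.exp_neg, one_div]
        exact inv_anti₀ (Real.exp_pos 1) (Real.exp_one_lt_d9.le.trans (by norm_num))
    _ = Real.exp (-b) := by rw [← Real.exp_nat_mul]; ring_nf

theorem choose_mul_pow_le_ofReal_of_eq_floor {δ : ℝ} (hδ : 0 < δ) {b : ℕ}
    (hb : b = 1 + ⌊3.5 * Real.log (1 / δ)⌋₊) :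
    (b.choose (b / 4 + 1) : ℝ≥0∞) * ENNReal.ofReal (1 / 1296) ^ (b / 4 + 1) ≤ ENNReal.ofReal δ := by
  have hlog : Real.log (1 / δ) ≤ b := by
    have := Nat.lt_floor_add_one (3.5 * Real.log (1 / δ))
    rw [hb]; push_cast
    rcases le_or_gt 0 (Real.log (1 / δ)) with h | h <;> linarith
  rw [← ENNReal.ofReal_pow (by norm_num), ← ENNReal.ofReal_natCast,
    ← ENNReal.ofReal_mul (by positivity)]
  refine ENNReal.ofReal_le_ofReal ((choose_mul_pow_le_exp_neg b).trans ?_)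
  calc Real.exp (-b) ≤ Real.exp (-Real.log (1 / δ)) := Real.exp_le_exp.2 (neg_le_neg hlog)
    _ = δ := by rw [one_div, Real.log_inv, neg_neg, Real.exp_log hδ]

theorem sqrt_div_div_le {t δ : ℝ} {b n : ℕ} (ht : 0 ≤ t) (hδ0 : 0 < δ) (hδ1 : δ < 1)
    (hb : b = 1 + ⌊3.5 * Real.log (1 / δ)⌋₊) (hbn : b ≤ n) :
    √(t / (n / b : ℕ)) ≤ 3 * √(t * (1 + Real.log (1 / δ)) / n) := by
  set L := Real.log (1 / δ)
  have hL : 0 ≤ L := Real.log_nonneg (by rw [one_div]; exact (one_lt_inv₀ hδ0).2 hδ1 |>.le)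
  have hb0 : 0 < b := by omega
  have hm : (0 : ℝ) < (n / b : ℕ) := by exact_mod_cast Nat.div_pos hbn hb0
  have hn : (n : ℝ) ≤ 2 * b * (n / b : ℕ) := by
    have := Nat.lt_div_mul_add (a := n) hb0
    have : b ≤ n / b * b := Nat.le_mul_of_pos_left b (Nat.div_pos hbn hb0)
    exact_mod_cast (by nlinarith : n ≤ 2 * b * (n / b))
  have h2b : 2 * (b : ℝ) ≤ 9 * (1 + L) := by
    have : (⌊3.5 * L⌋₊ : ℝ) ≤ 3.5 * L := Nat.floor_le (by positivity)
    rw [hb]; push_cast; linarith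
  rw [show 3 * √(t * (1 + L) / n) = √(9 * (t * (1 + L) / n)) by
    rw [Real.sqrt_mul (by norm_num), show (9 : ℝ) = 3 ^ 2 by norm_num, Real.sqrt_sq (by norm_num)]]
  apply Real.sqrt_le_sqrt
  have hnpos : (0 : ℝ) < n := by exact_mod_cast hb0.trans_le hbn
  rw [div_le_iff₀ hm, mul_div_assoc', div_mul_eq_mul_div, le_div_iff₀ hnpos]
  calc t * n ≤ t * (2 * b * (n / b : ℕ)) := by gcongr
    _ ≤ t * (9 * (1 + L) * (n / b : ℕ)) := by gcongr
    _ = 9 * (t * (1 + L)) * (n / b : ℕ) := by ring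

variable {Ω : Type*} [MeasurableSpace Ω] {P : Measure Ω}

theorem one_sub_le_measure_compl [IsProbabilityMeasure P] (s : Set Ω) : 1 - P s ≤ P sᶜ := by
  rw [tsub_le_iff_right, ← measure_univ (μ := P), ← Set.compl_union_self s]
  exact measure_union_le _ _

theorem measure_mul_sqrt_lt_norm_le {E : Type*} [NormedAddCommGroup E] [IsFiniteMeasure P]
    {Y : Ω → E} (hY : Integrable (fun ω => ‖Y ω‖ ^ 2) P) {c : ℝ} (hc : 0 < c) :
    P {ω | c * √(∫ ω, ‖Y ω‖ ^ 2 ∂P) < ‖Y ω‖} ≤ ENNReal.ofReal (c ^ 2)⁻¹ := by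
  set v := ∫ ω, ‖Y ω‖ ^ 2 ∂P
  rcases (integral_nonneg fun ω => sq_nonneg ‖Y ω‖ : 0 ≤ v).eq_or_lt with hv | hv
  · have hzero : ∀ᵐ ω ∂P, ‖Y ω‖ ^ 2 = 0 := (integral_eq_zero_iff_of_nonneg
      (fun ω => sq_nonneg ‖Y ω‖) hY).1 hv.symm
    refine le_of_eq_of_le (measure_mono_null (fun ω hω => ?_) (ae_iff.1 hzero)) bot_le
    rw [Set.mem_ofPred_eq, show v = 0 from hv.symm, Real.sqrt_zero, mul_zero] at hω
    exact pow_ne_zero 2 hω.ne'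
  · have hsub : {ω | c * √v < ‖Y ω‖} ⊆ {ω | c ^ 2 * v ≤ ‖Y ω‖ ^ 2} := fun ω hω => by
      have := pow_le_pow_left₀ (by positivity) (le_of_lt (Set.mem_ofPred_eq ▸ hω)) 2
      rwa [mul_pow, Real.sq_sqrt hv.le] at this
    have hmarkov := mul_meas_ge_le_integral_of_nonneg
      (Filter.Eventually.of_forall fun ω => sq_nonneg ‖Y ω‖) hY (c ^ 2 * v)
    have hreal : P.real {ω | c ^ 2 * v ≤ ‖Y ω‖ ^ 2} ≤ (c ^ 2)⁻¹ := by
      rw [← mul_le_mul_iff_right₀ (by positivity : 0 < c ^ 2 * v)]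
      calc c ^ 2 * v * P.real {ω | c ^ 2 * v ≤ ‖Y ω‖ ^ 2} ≤ v := hmarkov
        _ = c ^ 2 * v * (c ^ 2)⁻¹ := by field_simp
    calc P {ω | c * √v < ‖Y ω‖} ≤ P {ω | c ^ 2 * v ≤ ‖Y ω‖ ^ 2} := measure_mono hsub
      _ = ENNReal.ofReal (P.real {ω | c ^ 2 * v ≤ ‖Y ω‖ ^ 2}) := (ofReal_measureReal).symm
      _ ≤ ENNReal.ofReal (c ^ 2)⁻¹ := ENNReal.ofReal_le_ofReal hreal

namespace ProbabilityTheory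

theorem iIndepFun.iIndepFun_restrict_blocks {ι κ β : Type*} [MeasurableSpace β]
    {X : ι → Ω → β} (hX : iIndepFun X P) (hmeas : ∀ i, Measurable (X i)) {blk : κ → Finset ι}
    (hblk : Pairwise (Disjoint on blk)) :
    iIndepFun (fun j ω (k : blk j) => X k ω) P := by
  have := hX.isProbabilityMeasure
  rw [iIndepFun_iff_measure_inter_preimage_eq_mul]
  intro S sets hsets
  induction S using Finset.induction_on with
  | empty => simp
  | insert a S ha ih =>
    have hdisj : Disjoint (blk a) (S.biUnion blk) :=
      (disjoint_biUnion_right _ _ _).2 fun j hj => hblk (ne_of_mem_of_not_mem hj ha).symm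
    let restrict (j : S) (v : S.biUnion blk → β) (k : blk j) : β :=
      v ⟨k, mem_biUnion.2 ⟨j, j.2, k.2⟩⟩
    have hrest : ⋂ j ∈ S, (fun ω (k : blk j) => X k ω) ⁻¹' sets j =
        (fun ω (k : S.biUnion blk) => X k ω) ⁻¹' ⋂ j : S, restrict j ⁻¹' sets j := by
      rw [Set.preimage_iInter, Set.iInter_subtype]; rfl
    have hmeasS : MeasurableSet (⋂ j : S, restrict j ⁻¹' sets j) :=
      .iInter fun j => (measurable_pi_lambda _ fun k => measurable_pi_apply _)
        (hsets j (mem_insert_of_mem j.2))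
    rw [set_biInter_insert, prod_insert ha, hrest,
      (hX.indepFun_finset _ _ hdisj hmeas).measure_inter_preimage_eq_mul _ _
        (hsets a (mem_insert_self a S)) hmeasS, ← hrest,
      ih fun j hj => hsets j (mem_insert_of_mem hj)]

theorem iIndepFun.measure_le_card_filter_mem_le {ι : Type*} [Fintype ι] {β : ι → Type*}
    {mβ : ∀ i, MeasurableSpace (β i)} {Y : ∀ i, Ω → β i} (hY : iIndepFun Y P)
    {C : ∀ i, Set (β i)} (hC : ∀ i, MeasurableSet (C i)) {p : ℝ≥0∞}
    (hp : ∀ i, P (Y i ⁻¹' C i) ≤ p) (q : ℕ) :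
    P {ω | q ≤ #{i | Y i ω ∈ C i}} ≤ (Fintype.card ι).choose q * p ^ q :=
  calc P {ω | q ≤ #{i | Y i ω ∈ C i}}
      ≤ P (⋃ S ∈ powersetCard q univ, ⋂ i ∈ S, Y i ⁻¹' C i) := measure_mono fun ω hω => by
        obtain ⟨S, hS, hcard⟩ := exists_subset_card_eq hω
        simp only [Set.mem_iUnion, Set.mem_iInter, mem_powersetCard]
        exact ⟨S, ⟨subset_univ S, hcard⟩, fun i hi => (mem_filter.1 (hS hi)).2⟩
    _ ≤ ∑ S ∈ powersetCard q univ, P (⋂ i ∈ S, Y i ⁻¹' C i) := measure_biUnion_finset_le _ _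
    _ ≤ ∑ S ∈ powersetCard q (univ : Finset ι), p ^ q := sum_le_sum fun S hS => by
        rw [hY.measure_inter_preimage_eq_mul S fun i _ => hC i, ← (mem_powersetCard.1 hS).2]
        exact prod_le_pow_card _ _ _ fun i _ => hp i
    _ = _ := by rw [sum_const, card_powersetCard, card_univ, nsmul_eq_mul]

section InnerProductSpace

variable {ι E : Type*} [NormedAddCommGroup E] [InnerProductSpace ℝ E] [CompleteSpace E]
  [MeasurableSpace E] [BorelSpace E] {X : ι → Ω → E}

theorem iIndepFun.integral_norm_sum_sq (hX : iIndepFun X P) (hL2 : ∀ i, MemLp (X i) 2 P)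
    (hmean : ∀ i, P[X i] = 0) (s : Finset ι) :
    ∫ ω, ‖∑ i ∈ s, X i ω‖ ^ 2 ∂P = ∑ i ∈ s, ∫ ω, ‖X i ω‖ ^ 2 ∂P := by
  have := hX.isProbabilityMeasure
  have hint : ∀ i, Integrable (X i) P := fun i => (hL2 i).integrable one_le_two
  have hinner : ∀ i j, Integrable (fun ω => ⟪X i ω, X j ω⟫_ℝ) P := by
    intro i j
    rcases eq_or_ne i j with rfl | hij
    · simpa only [real_inner_self_eq_norm_sq] using (hL2 i).integrable_norm_pow two_ne_zero
    · exact (hX.indepFun hij).integrable_bilin (hint i) (hint j) (innerSL ℝ)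
  have hcross : ∀ i j, i ≠ j → ∫ ω, ⟪X i ω, X j ω⟫_ℝ ∂P = 0 := fun i j hij =>
    ((hX.indepFun hij).integral_bilin (hint i) (hint j) (innerSL ℝ)).trans (by simp [hmean])
  simp_rw [← real_inner_self_eq_norm_sq, sum_inner, inner_sum]
  rw [integral_finsetSum _ fun i _ => integrable_finsetSum _ fun j _ => hinner i j]
  refine sum_congr rfl fun i hi => ?_
  rw [integral_finsetSum _ fun j _ => hinner i j,
    sum_eq_single i (fun j _ hji => hcross i j hji.symm) (absurd hi)]

theorem iIndepFun.integral_norm_average_sub_sq (hX : iIndepFun X P) (hL2 : ∀ i, MemLp (X i) 2 P)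
    {μ : E} (hmean : ∀ i, P[X i] = μ) {t : ℝ} (hvar : ∀ i, ∫ ω, ‖X i ω - μ‖ ^ 2 ∂P = t)
    {s : Finset ι} (hs : s.Nonempty) :
    ∫ ω, ‖(#s : ℝ)⁻¹ • ∑ i ∈ s, X i ω - μ‖ ^ 2 ∂P = t / #s := by
  have := hX.isProbabilityMeasure
  have hs' : (#s : ℝ) ≠ 0 := by exact_mod_cast hs.card_pos.ne'
  have hcenter (ω : Ω) :
      (#s : ℝ)⁻¹ • ∑ i ∈ s, X i ω - μ = (#s : ℝ)⁻¹ • ∑ i ∈ s, (X i ω - μ) := by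
    rw [sum_sub_distrib, sum_const, smul_sub, ← Nat.cast_smul_eq_nsmul ℝ, smul_smul,
      inv_mul_cancel₀ hs', one_smul]
  have hsum := (hX.comp (fun _ v => v - μ) fun _ => measurable_sub_const μ).integral_norm_sum_sq
    (fun i => (hL2 i).sub (memLp_const μ))
    (fun i => by simp [integral_sub ((hL2 i).integrable one_le_two), hmean]) s
  simp only [comp_apply, hvar, sum_const, nsmul_eq_mul] at hsum
  simp_rw [hcenter, norm_smul, mul_pow, integral_const_mul, hsum, norm_inv, Real.norm_natCast]
  field_simp

theorem iIndepFun.measure_lt_norm_average_sub_le (hX : iIndepFun X P)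
    (hL2 : ∀ i, MemLp (X i) 2 P)
    {μ : E} (hmean : ∀ i, P[X i] = μ) {t : ℝ} (hvar : ∀ i, ∫ ω, ‖X i ω - μ‖ ^ 2 ∂P = t)
    {s : Finset ι} (hs : s.Nonempty) {c : ℝ} (hc : 0 < c) :
    P {ω | c * √(t / #s) < ‖(#s : ℝ)⁻¹ • ∑ i ∈ s, X i ω - μ‖} ≤ ENNReal.ofReal (c ^ 2)⁻¹ := by
  have := hX.isProbabilityMeasure
  have hL2avg : MemLp (fun ω => (#s : ℝ)⁻¹ • ∑ i ∈ s, X i ω - μ) 2 P :=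
    ((memLp_finsetSum s fun i _ => hL2 i).const_smul _).sub (memLp_const μ)
  have h := measure_mul_sqrt_lt_norm_le (hL2avg.integrable_norm_pow two_ne_zero) hc
  rwa [hX.integral_norm_average_sub_sq hL2 hmean hvar hs] at h

theorem iIndepFun.measure_lt_norm_medianOfMeans_sub_le [SecondCountableTopology E]
    {κ : Type*} [Fintype κ] [Nonempty κ]
    (hX : iIndepFun X P) (hmeas : ∀ i, Measurable (X i)) (hL2 : ∀ i, MemLp (X i) 2 P)
    {μ : E} (hmean : ∀ i, P[X i] = μ) {t : ℝ} (hvar : ∀ i, ∫ ω, ‖X i ω - μ‖ ^ 2 ∂P = t)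
    {blk : κ → Finset ι} (hblk : Pairwise (Disjoint on blk)) {m : ℕ} (hm : 0 < m)
    (hcard : ∀ j, #(blk j) = m) {z : Ω → E}
    (hz : ∀ ω, ∑ j, ‖z ω - (m : ℝ)⁻¹ • ∑ k ∈ blk j, X k ω‖ ≤
      ∑ j, ‖μ - (m : ℝ)⁻¹ • ∑ k ∈ blk j, X k ω‖) :
    P {ω | 144 * √(t / m) < ‖z ω - μ‖} ≤
      (Fintype.card κ).choose (Fintype.card κ / 4 + 1) *
        ENNReal.ofReal (1 / 1296) ^ (Fintype.card κ / 4 + 1) := by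
  set Y : κ → Ω → E := fun j ω => (m : ℝ)⁻¹ • ∑ k ∈ blk j, X k ω
  set r := 36 * √(t / m)
  have hY : iIndepFun Y P := by
    have hYeq : Y = fun j => (fun v => (m : ℝ)⁻¹ • ∑ k, v k) ∘ fun ω (k : blk j) => X k ω := by
      funext j ω
      exact congrArg _ (sum_coe_sort (blk j) fun k => X k ω).symm
    exact hYeq ▸ (hX.iIndepFun_restrict_blocks hmeas hblk).comp _
      fun _ => (measurable_sum _ fun k _ => measurable_pi_apply k).const_smul _
  have hfail (j : κ) : P (Y j ⁻¹' {v | r < ‖v - μ‖}) ≤ ENNReal.ofReal (1 / 1296) := by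
    have := hX.measure_lt_norm_average_sub_le hL2 hmean hvar (card_pos.1 (hcard j ▸ hm))
      (by norm_num : (0 : ℝ) < 36)
    rwa [hcard j, show ((36 : ℝ) ^ 2)⁻¹ = 1 / 1296 by norm_num] at this
  refine (measure_mono fun ω hω => ?_).trans (hY.measure_le_card_filter_mem_le
    (fun _ => measurableSet_lt measurable_const (by fun_prop)) hfail _)
  by_contra hfew
  simp only [Set.mem_ofPred_eq, not_le] at hfew hω
  exact hω.not_ge ((norm_sub_le_four_mul_of_sum_norm_sub_le (y := (Y · ω)) (r := r) (hz ω)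
    (by positivity) (by omega)).trans_eq (by ring))

end InnerProductSpace

end ProbabilityTheory

/-- Geometric median-of-means (Minsker 2015, Theorem 1): there is a universal constant `C` such
that for i.i.d. vectors with mean `μ` and covariance `Σ`, `δ ∈ (0,1)`,
`b = 1 + ⌊3.5 log(1/δ)⌋ ≤ n` blocks of size `⌊n/b⌋`, the geometric median of the block sample
means is within `C sqrt(trace(Σ)(1 + log(1/δ))/n)` of `μ` with probability at least `1 − δ`. -/
theorem stmt13 :
    ∃ C : ℝ, 0 < C ∧
      ∀ {Ω : Type} [MeasurableSpace Ω] (P : Measure Ω), IsProbabilityMeasure P →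
      ∀ (d n : ℕ) (x : Fin n → Ω → EuclideanSpace ℝ (Fin d)),
        (∀ i, Measurable (x i)) →
        iIndepFun x P →
      ∀ (ν : Measure (EuclideanSpace ℝ (Fin d))), (∀ i, Measure.map (x i) P = ν) →
      ∀ (μ : EuclideanSpace ℝ (Fin d)), (∀ i, Integrable (x i) P) →
        (∀ i, ∫ ω, x i ω ∂P = μ) →
      ∀ (Sig : Matrix (Fin d) (Fin d) ℝ),
        (∀ i, Integrable (fun ω => ‖x i ω - μ‖ ^ 2) P) →
        (∀ i, ∫ ω, ‖x i ω - μ‖ ^ 2 ∂P = Sig.trace) →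
      ∀ δ : ℝ, 0 < δ → δ < 1 →
      ∀ b : ℕ, b = 1 + ⌊3.5 * Real.log (1 / δ)⌋₊ → b ≤ n →
      -- the i-th block sample mean (block size `m = n / b`)
      ∀ blockMean : Fin b → Ω → EuclideanSpace ℝ (Fin d),
        (∀ i ω, blockMean i ω =
          ((n / b : ℕ) : ℝ)⁻¹ •
            ∑ k ∈ Finset.univ.filter (fun k : Fin n => k.val / (n / b) = i.val), x k ω) →
      -- `gmom ω` is a geometric median of the block means
      ∀ gmom : Ω → EuclideanSpace ℝ (Fin d),
        (∀ ω ν', ∑ i, ‖gmom ω - blockMean i ω‖ ≤ ∑ i, ‖ν' - blockMean i ω‖) →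
        ENNReal.ofReal (1 - δ) ≤
          P {ω | ‖gmom ω - μ‖ ≤
            C * Real.sqrt (Sig.trace * (1 + Real.log (1 / δ)) / n)} := by
  refine ⟨432, by norm_num, ?_⟩
  intro Ω _ P _ d n x hmeas hindep ν _ μ _ hmean Sig hsq hvar δ hδ0 hδ1 b hb hbn blockMean hbm
    gmom hgmom
  have hb0 : 0 < b := by omega
  have : Nonempty (Fin b) := Fin.pos_iff_nonempty.1 hb0
  have hm : 0 < n / b := Nat.div_pos hbn hb0
  have hcard (i : Fin b) : #{k : Fin n | k.val / (n / b) = i.val} = n / b :=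
    card_filter_div_eq hm ((Nat.mul_le_mul_right _ i.isLt).trans (Nat.mul_div_le n b))
  have hdisj :
      Pairwise (Disjoint on fun i : Fin b => ({k | k.val / (n / b) = i.val} : Finset (Fin n))) :=
    fun i j hij => disjoint_filter.2 fun k _ hi hj => hij (Fin.ext (hi.symm.trans hj))
  have hL2 (k : Fin n) : MemLp (x k) 2 P :=
    (((memLp_two_iff_integrable_sq_norm ((hmeas k).sub_const μ).aestronglyMeasurable).2
      (hsq k)).add (memLp_const μ)).ae_eq (ae_of_all _ fun ω => sub_add_cancel (x k ω) μ)
  have hbad := hindep.measure_lt_norm_medianOfMeans_sub_le hmeas hL2 hmean hvar hdisj hm hcard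
    (z := gmom) fun ω => by simpa only [hbm] using hgmom ω μ
  rw [Fintype.card_fin] at hbad
  have htrace : 0 ≤ Sig.trace := hvar ⟨0, by omega⟩ ▸ integral_nonneg fun ω => sq_nonneg _
  calc ENNReal.ofReal (1 - δ) = 1 - ENNReal.ofReal δ := by
        rw [ENNReal.ofReal_sub _ hδ0.le, ENNReal.ofReal_one]
    _ ≤ 1 - P {ω | 144 * √(Sig.trace / (n / b : ℕ)) < ‖gmom ω - μ‖} :=
        tsub_le_tsub_left (hbad.trans (choose_mul_pow_le_ofReal_of_eq_floor hδ0 hb)) 1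
    _ ≤ P {ω | 144 * √(Sig.trace / (n / b : ℕ)) < ‖gmom ω - μ‖}ᶜ := one_sub_le_measure_compl _
    _ ≤ _ := measure_mono fun ω hω => by
        simp only [Set.mem_compl_iff, Set.mem_ofPred_eq, not_lt] at hω ⊢
        linarith [sqrt_div_div_le htrace hδ0 hδ1 hb hbn]
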